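/- Let I = (G, {W_1, …, W_t}, k) be an instance of Partitioned Subset Treewidth and let (A, S, B) be a safe separation of I. If I is a yes-instance, then both I ◁ (A,S) and I ◁ (B,S) are yes-instances. -/

import Mathlib

open SimpleGraph

variable {V ι : Type*}

/-- The torso of `G` on a vertex set `X`: vertices `u ≠ v` of `X` are adjacent iff there is a
`u`–`v` walk in `G` all of whose internal vertices lie outside `X`. -/
def torsoGraph (G : SimpleGraph V) (X : Set V) : SimpleGraph V where
  Adj u v := u ≠ v ∧ u ∈ X ∧ v ∈ X ∧
    ∃ p : G.Walk u v, ∀ w ∈ p.support, w = u ∨ w = v ∨ w ∉ X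
  symm := by
    refine ⟨?_⟩
    rintro u v ⟨hne, hu, hv, p, hp⟩
    refine ⟨hne.symm, hv, hu, p.reverse, ?_⟩
    intro w hw
    rw [SimpleGraph.Walk.support_reverse, List.mem_reverse] at hw
    rcases hp w hw with h | h | h
    · exact Or.inr (Or.inl h)
    · exact Or.inl h
    · exact Or.inr (Or.inr h)
  loopless := ⟨fun _ h => h.1 rfl⟩

/-- `(T, bag)` is a tree decomposition of `G`. -/
structure IsTreeDecomp (G : SimpleGraph V) (T : SimpleGraph ι) (bag : ι → Set V) : Prop where
  tree : T.IsTree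
  mem_bag : ∀ v : V, ∃ t, v ∈ bag t
  edge_bag : ∀ ⦃u v : V⦄, G.Adj u v → ∃ t, u ∈ bag t ∧ v ∈ bag t
  conn : ∀ v : V, (T.induce {t | v ∈ bag t}).Connected

/-- `(X, (T, bag))` is a torso tree decomposition in `G`, i.e. `(T, bag)` is a tree
decomposition of `torsoGraph G X`. -/
structure IsTorsoTreeDecomp (G : SimpleGraph V) (X : Set V)
    (T : SimpleGraph ι) (bag : ι → Set V) : Prop where
  tree : T.IsTree
  bag_subset : ∀ t, bag t ⊆ X
  mem_bag : ∀ v ∈ X, ∃ t, v ∈ bag t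
  edge_bag : ∀ ⦃u v : V⦄, (torsoGraph G X).Adj u v → ∃ t, u ∈ bag t ∧ v ∈ bag t
  conn : ∀ v ∈ X, (T.induce {t | v ∈ bag t}).Connected

/-- `G` has treewidth at most `k`. -/
def HasTreewidthAtMost (G : SimpleGraph V) (k : ℕ) : Prop :=
  ∃ (n : ℕ) (T : SimpleGraph (Fin n)) (bag : Fin n → Set V),
    IsTreeDecomp G T bag ∧ ∀ t, (bag t).ncard ≤ k + 1

/-- `S` is an `(X, Y)`-separator in `G`: every walk from `X` to `Y` meets `S`. -/
def IsSep (G : SimpleGraph V) (X Y S : Set V) : Prop :=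
  ∀ ⦃x y : V⦄, x ∈ X → y ∈ Y → ∀ p : G.Walk x y, ∃ s ∈ S, s ∈ p.support

/-- The maximum number of vertex-disjoint `X`–`Y` paths; by Menger's theorem this equals the
minimum size of an `(X, Y)`-separator, which is how we define it. -/
noncomputable def flowG (G : SimpleGraph V) (X Y : Set V) : ℕ :=
  sInf (Set.ncard '' {S : Set V | IsSep G X Y S})

/-- `X` is linked into `Y`. -/
def LinkedInto (G : SimpleGraph V) (X Y : Set V) : Prop :=
  flowG G X Y = X.ncard

/-- `X` is strictly linked into `Y`. -/
def StrictlyLinkedInto (G : SimpleGraph V) (X Y : Set V) : Prop :=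
  LinkedInto G X Y ∧
    ∀ S : Set V, IsSep G X Y S → S.ncard = X.ncard → S = X ∨ S = Y

/-- `R_G(X, S)`: the set of vertices of `G \ S` reachable from `X \ S`. -/
def reachG (G : SimpleGraph V) (X S : Set V) : Set V :=
  {v | ∃ x ∈ X, x ∉ S ∧ ∃ p : G.Walk x v, ∀ w ∈ p.support, w ∉ S}

/-- `S` is a minimal `(X, Y)`-separator. -/
def IsMinimalSep (G : SimpleGraph V) (X Y S : Set V) : Prop :=
  IsSep G X Y S ∧ ∀ S' : Set V, S' ⊂ S → ¬ IsSep G X Y S'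

/-- `S` is an important `(A, B)`-separator. -/
def IsImportantSep (G : SimpleGraph V) (A B S : Set V) : Prop :=
  IsMinimalSep G A B S ∧
    ¬ ∃ S' : Set V, IsSep G A B S' ∧ S'.ncard ≤ S.ncard ∧ reachG G A S ⊂ reachG G A S'

/-- The important `(A, B)`-separator `S'` dominates the `(A, B)`-separator `S`. -/
def DominatesSep (G : SimpleGraph V) (A B S S' : Set V) : Prop :=
  IsImportantSep G A B S' ∧ S'.ncard ≤ S.ncard ∧ reachG G A S ⊆ reachG G A S'

/-- `(A, S, B)` is a separation of `G`. -/
structure IsSeparation (G : SimpleGraph V) (A S B : Set V) : Prop where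
  disjoint_AS : Disjoint A S
  disjoint_AB : Disjoint A B
  disjoint_SB : Disjoint S B
  union_eq : A ∪ S ∪ B = Set.univ
  no_adj : ∀ ⦃a b : V⦄, a ∈ A → b ∈ B → ¬ G.Adj a b

open Classical in
/-- The flow potential `flp_G(X, Y)`. -/
noncomputable def flpG (G : SimpleGraph V) (X Y : Set V) : ℕ :=
  if X = Set.univ then X.ncard
  else sInf {n : ℕ | ∃ A S B : Set V, IsSeparation G A S B ∧
    X ⊆ A ∪ S ∧ Y ⊆ B ∪ S ∧ B.Nonempty ∧ S.ncard = n}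

/-- The graph consisting of a clique on `S` (and no other edges). -/
def cliqueOn (S : Set V) : SimpleGraph V where
  Adj u v := u ≠ v ∧ u ∈ S ∧ v ∈ S
  symm := ⟨fun _ _ ⟨h, hu, hv⟩ => ⟨h.symm, hv, hu⟩⟩
  loopless := ⟨fun _ h => h.1 rfl⟩

/-- `G ⊗ S`: the graph obtained from `G` by making `S` a clique. -/
def addCliqueG (G : SimpleGraph V) (S : Set V) : SimpleGraph V := G ⊔ cliqueOn S

/-- `(G, Ws, k)` is an instance of Partitioned Subset Treewidth: `Ws` is a finite nonempty
family of terminal cliques, `k ≥ 1`, each terminal clique being a clique of `G` of size at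
most `k + 1`. -/
def IsPSTWInstance (G : SimpleGraph V) (Ws : Set (Set V)) (k : ℕ) : Prop :=
  Ws.Finite ∧ Ws.Nonempty ∧ 1 ≤ k ∧ ∀ W ∈ Ws, G.IsClique W ∧ W.ncard ≤ k + 1

/-- `(X, (T, bag))` is a solution of the instance `(G, Ws, k)`. -/
def IsSolutionTD (G : SimpleGraph V) (Ws : Set (Set V)) (k : ℕ)
    (X : Set V) (T : SimpleGraph ι) (bag : ι → Set V) : Prop :=
  IsTorsoTreeDecomp G X T bag ∧ ⋃₀ Ws ⊆ X ∧ ∀ t, (bag t).ncard ≤ k + 1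

/-- The instance `(G, Ws, k)` is a yes-instance. -/
def IsYesInstance (G : SimpleGraph V) (Ws : Set (Set V)) (k : ℕ) : Prop :=
  ∃ (κ : Type) (T : SimpleGraph κ) (bag : κ → Set V) (X : Set V),
    IsSolutionTD G Ws k X T bag

/-- `W̄_I(W)`: the union of the terminal cliques other than `W`. -/
def otherUnion (Ws : Set (Set V)) (W : Set V) : Set V := ⋃₀ (Ws \ {W})

/-- `flp_I(W) = flp_G(W, W̄_I(W))`. -/
noncomputable def flpInst (G : SimpleGraph V) (Ws : Set (Set V)) (W : Set V) : ℕ :=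
  flpG G W (otherUnion Ws W)

/-- `(A, S, B)` is a safe separation of the instance `(G, Ws, k)`. -/
def IsSafeSeparation (G : SimpleGraph V) (Ws : Set (Set V)) (A S B : Set V) : Prop :=
  IsSeparation G A S B ∧ A.Nonempty ∧ B.Nonempty ∧
    ∃ Wa ∈ Ws, ∃ Wb ∈ Ws,
      LinkedInto G S ((A ∪ S) ∩ Wa) ∧ LinkedInto G S ((B ∪ S) ∩ Wb)

/-- `Ws ◁ (A, S)`: remove the terminal cliques not meeting `A`, then insert `S` if no superset
of `S` is present. -/
def restrictCliques (Ws : Set (Set V)) (A S : Set V) : Set (Set V) :=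
  {W ∈ Ws | (W ∩ A).Nonempty} ∪
    {W | W = S ∧ ¬ ∃ W' ∈ Ws, (W' ∩ A).Nonempty ∧ S ⊆ W'}

/-- `G ◁ (A, S) = G[A ∪ S] ⊗ S`, as a graph on the vertex set `A ∪ S`. -/
def restrictGraph (G : SimpleGraph V) (A S : Set V) : SimpleGraph ↥(A ∪ S) :=
  addCliqueG (G.induce (A ∪ S)) (Subtype.val ⁻¹' S)

/-- The terminal cliques of `I ◁ (A, S)`, viewed as subsets of the vertex set `A ∪ S`. -/
def restrictSets (Ws : Set (Set V)) (A S : Set V) : Set (Set ↥(A ∪ S)) :=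
  (fun W => Subtype.val ⁻¹' W) '' restrictCliques Ws A S

/-- The terminal cliques of `I × (Wi, Wj)`. -/
def mergeCliques (Ws : Set (Set V)) (Wi Wj : Set V) : Set (Set V) :=
  insert (Wi ∪ Wj) (Ws \ {Wi, Wj})

/-- The terminal cliques of `I + (W, ·)`, replacing `W` by `W'`. -/
def replaceClique (Ws : Set (Set V)) (W W' : Set V) : Set (Set V) :=
  insert W' (Ws \ {W})

/-- The instance `(G, Ws, k)` is maximally merged. -/
def MaximallyMerged (G : SimpleGraph V) (Ws : Set (Set V)) (k : ℕ) : Prop :=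
  ∀ Wi ∈ Ws, ∀ Wj ∈ Ws, Wi ≠ Wj → (Wi ∪ Wj).ncard ≤ k + 1 →
    ¬ IsYesInstance (addCliqueG G (Wi ∪ Wj)) (mergeCliques Ws Wi Wj) k

/-- `Wi` is a potential forget-clique of the instance `(G, Ws, k)`. -/
def IsPotentialForgetClique (G : SimpleGraph V) (Ws : Set (Set V)) (k : ℕ)
    (Wi : Set V) : Prop :=
  ∃ (κ : Type) (T : SimpleGraph κ) (bag : κ → Set V) (X : Set V),
    IsSolutionTD G Ws k X T bag ∧
    ∃ l p : κ, T.Adj l p ∧ (∀ q, T.Adj l q → q = p) ∧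
      Wi ⊆ bag l ∧ ∃ w ∈ Wi \ otherUnion Ws Wi, bag p = bag l \ {w}

/-- The disjoint union of two trees together with one extra edge between `a` and `b`. -/
def glueTrees {ι₁ ι₂ : Type*} (T₁ : SimpleGraph ι₁) (T₂ : SimpleGraph ι₂)
    (a : ι₁) (b : ι₂) : SimpleGraph (ι₁ ⊕ ι₂) where
  Adj x y :=
    (∃ u v, T₁.Adj u v ∧ x = Sum.inl u ∧ y = Sum.inl v) ∨
    (∃ u v, T₂.Adj u v ∧ x = Sum.inr u ∧ y = Sum.inr v) ∨
    (x = Sum.inl a ∧ y = Sum.inr b) ∨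
    (x = Sum.inr b ∧ y = Sum.inl a)
  symm := by
    refine ⟨?_⟩
    rintro x y (⟨u, v, h, rfl, rfl⟩ | ⟨u, v, h, rfl, rfl⟩ | ⟨rfl, rfl⟩ | ⟨rfl, rfl⟩)
    · exact Or.inl ⟨v, u, h.symm, rfl, rfl⟩
    · exact Or.inr (Or.inl ⟨v, u, h.symm, rfl, rfl⟩)
    · exact Or.inr (Or.inr (Or.inr ⟨rfl, rfl⟩))
    · exact Or.inr (Or.inr (Or.inl ⟨rfl, rfl⟩))
  loopless := by
    refine ⟨?_⟩
    rintro x (⟨u, v, h, rfl, he⟩ | ⟨u, v, h, rfl, he⟩ | ⟨rfl, he⟩ | ⟨rfl, he⟩)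
    · exact h.ne (Sum.inl.inj he)
    · exact h.ne (Sum.inr.inj he)
    · exact Sum.inl_ne_inr he
    · exact Sum.inr_ne_inl he

/-- The sum of the weights `d` over the set `S`. -/
noncomputable def setSum [Finite V] (d : V → ℕ) (S : Set V) : ℕ :=
  ∑ v ∈ S.toFinite.toFinset, d v
/-!
Let `(X, (T, bag))` be a solution of `I`. As `S` is linked into `(B ∪ S) ∩ W_b`, Menger's theorem
yields disjoint paths `P_s` (`s ∈ S`) from `S` into the clique `W_b ⊆ X`, each meeting `S` only
in `s` and therefore running inside `B ∪ {s}`. The sets `X ∩ P_s`, together with the singletons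
of `X ∩ A`, are the branch sets of a minor model of the torso of `G ◁ (A, S)` on `(X ∩ A) ∪ S`
inside the torso of `G` on `X`: the clique on `S` is realised through the clique `W_b`, and a
torso edge of `G ◁ (A, S)` leaving `s ∈ S` is realised from the first vertex of `P_s` in `X`.
Replacing every bag by the set of branch sets it meets gives a torso tree decomposition of
`G ◁ (A, S)`; as the branch sets are disjoint, the width does not grow, and the new terminal
cliques are covered. Exchanging `A` and `B` and using `W_a` gives `I ◁ (B, S)`.
-/

section

variable {G H : SimpleGraph V} {A B C K S X Y Z : Set V} {a b u v w x y : V}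
  {κ : Type*} {T : SimpleGraph κ} {bag : κ → Set V}

namespace SimpleGraph.Walk

theorem exists_isPath_to_first_mem (p : G.Walk u v) (hC : ∃ c ∈ C, c ∈ p.support) :
    ∃ c ∈ C, ∃ q : G.Walk u c, q.IsPath ∧ q.support ⊆ p.support ∧
      ∀ w ∈ q.support, w ∈ C → w = c := by
  classical
  suffices ∃ c ∈ C, ∃ q : G.Walk u c, q.support ⊆ p.support ∧
      ∀ w ∈ q.support, w ∈ C → w = c by
    obtain ⟨c, hc, q, hqp, hqC⟩ := this
    have hsub := q.support_bypass_subset_support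
    exact ⟨c, hc, q.bypass, q.bypass_isPath, List.Subset.trans hsub hqp,
      fun w hw => hqC w (hsub hw)⟩
  induction p with
  | nil =>
    obtain ⟨c, hc, hcp⟩ := hC
    rw [support_nil, List.mem_singleton] at hcp
    subst hcp
    exact ⟨c, hc, nil, by simp, by simp⟩
  | @cons u' _ _ h p ih =>
    by_cases hu : u' ∈ C
    · exact ⟨u', hu, nil, by simp, by simp⟩
    obtain ⟨c, hc, q, hqp, hqC⟩ := ih <| by
      obtain ⟨c, hc, hcp⟩ := hC
      rw [support_cons, List.mem_cons] at hcp
      exact ⟨c, hc, hcp.resolve_left fun h => hu (h ▸ hc)⟩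
    refine ⟨c, hc, cons h q, List.cons_subset_cons _ hqp, ?_⟩
    simp only [support_cons, List.mem_cons, forall_eq_or_imp]
    exact ⟨fun h => absurd h hu, hqC⟩

theorem exists_deleteEdges_to_first_mem (p : G.Walk u v) (hx : x ∈ C) (hy : y ∈ C)
    (hxy : x ≠ y) (hC : ∃ c ∈ C, c ∈ p.support) :
    ∃ c ∈ C, ∃ q : (G.deleteEdges {s(x, y)}).Walk u c, q.support ⊆ p.support ∧
      ∀ z ∈ q.support, z ∈ C → z = c := by
  obtain ⟨c, hc, q, -, hqp, hqC⟩ := p.exists_isPath_to_first_mem hC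
  have he : s(x, y) ∉ q.edges := fun he => hxy <|
    (hqC x (q.fst_mem_support_of_mem_edges he) hx).trans
      (hqC y (q.snd_mem_support_of_mem_edges he) hy).symm
  exact ⟨c, hc, q.toDeleteEdge _ he, by simpa using hqp, by simpa using hqC⟩

theorem IsPath.eq_of_mem_takeUntil [DecidableEq V] {p : G.Walk u v} (hp : p.IsPath)
    (hC : ∀ z ∈ p.support, z ∈ C → z = v) (hw : w ∈ p.support) {z : V}
    (hz : z ∈ (p.takeUntil w hw).support) (hzC : z ∈ C) : z = v ∧ w = v := by
  have hzv := hC z (p.support_takeUntil_subset_support hw hz) hzC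
  refine ⟨hzv, by_contra fun hwv => ?_⟩
  exact endpoint_notMem_support_takeUntil hp hw (Ne.symm hwv) (hzv ▸ hz)

end SimpleGraph.Walk

theorem IsSep.symm (h : IsSep G A B Y) : IsSep G B A Y := by
  intro b a hb ha p
  obtain ⟨s, hs, hsp⟩ := h ha hb p.reverse
  exact ⟨s, hs, by simpa using hsp⟩

theorem notMem_of_mem_reachG (hv : v ∈ reachG G A Y) : v ∉ Y := by
  obtain ⟨_, _, _, p, hp⟩ := hv
  exact hp v p.end_mem_support

theorem IsSep.notMem_reachG (h : IsSep G A B Y) (hv : v ∈ reachG G A Y) :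
    v ∉ reachG G B Y := by
  rintro ⟨b, hb, -, q, hq⟩
  obtain ⟨a, ha, -, p, hp⟩ := hv
  obtain ⟨s, hs, hsp⟩ := h ha hb (p.append q.reverse)
  rw [Walk.mem_support_append_iff, Walk.support_reverse, List.mem_reverse] at hsp
  exact hsp.elim (hp s · hs) (hq s · hs)

theorem IsSep.eq_of_mem_support [DecidableEq V] {CA CB : Set V} (hY : IsSep G A B Y)
    (hCA : Y ⊆ CA) (hCB : Y ⊆ CB) {ca cb : V} (ha : a ∈ A) (hb : b ∈ B)
    {P : G.Walk a ca} {Q : G.Walk b cb} (hP : P.IsPath) (hQ : Q.IsPath)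
    (hPC : ∀ z ∈ P.support, z ∈ CA → z = ca) (hQC : ∀ z ∈ Q.support, z ∈ CB → z = cb)
    (hvP : v ∈ P.support) (hvQ : v ∈ Q.support) : ca = cb := by
  obtain ⟨s, hsY, hs⟩ := hY ha hb ((P.takeUntil v hvP).append (Q.takeUntil v hvQ).reverse)
  rw [Walk.mem_support_append_iff, Walk.support_reverse, List.mem_reverse] at hs
  rcases hs with hs | hs
  · obtain ⟨hsca, hvca⟩ := hP.eq_of_mem_takeUntil hPC hvP hs (hCA hsY)
    exact hvca ▸ hQC v hvQ (hCB (hvca ▸ hsca ▸ hsY))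
  · obtain ⟨hscb, hvcb⟩ := hQ.eq_of_mem_takeUntil hQC hvQ hs (hCB hsY)
    exact (hvcb ▸ hPC v hvP (hCA (hvcb ▸ hscb ▸ hsY))).symm

theorem IsSep.exists_mem_support_or_mem_support (hY : IsSep (G.deleteEdges {s(x, y)}) A B Y)
    (ha : a ∈ A) (hb : b ∈ B) (p : G.Walk a b) :
    (∃ s ∈ Y, s ∈ p.support) ∨ x ∈ p.support := by
  by_cases he : s(x, y) ∈ p.edges
  · exact Or.inr (p.fst_mem_support_of_mem_edges he)
  · obtain ⟨s, hs, hsp⟩ := hY ha hb (p.toDeleteEdge _ he)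
    exact Or.inl ⟨s, hs, by simpa using hsp⟩

theorem IsSep.exists_reachG_of_deleteEdges (hxy : x ≠ y)
    (hY : IsSep (G.deleteEdges {s(x, y)}) A B Y) (hnot : ¬ IsSep G A B Y) :
    ∃ x' y', s(x', y') = s(x, y) ∧ x' ∈ reachG (G.deleteEdges {s(x, y)}) A Y ∧
      y' ∈ reachG (G.deleteEdges {s(x, y)}) B Y := by
  simp only [IsSep, not_forall, not_exists, not_and] at hnot
  obtain ⟨a, b, ha, hb, p, hp⟩ := hnot
  have hxp : x ∈ p.support :=
    (hY.exists_mem_support_or_mem_support ha hb p).resolve_left fun ⟨s, hs, hsp⟩ => hp s hs hsp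
  have hreach : ∀ {A' : Set V} {a' b' : V} (q : G.Walk a' b'), a' ∈ A' →
      (∀ s ∈ Y, s ∉ q.support) → x ∈ q.support →
      ∃ c ∈ ({x, y} : Set V), c ∈ reachG (G.deleteEdges {s(x, y)}) A' Y := by
    intro A' a' b' q ha' hq hxq
    obtain ⟨c, hc, r, hrq, -⟩ := q.exists_deleteEdges_to_first_mem (C := {x, y})
      (by simp) (by simp) hxy ⟨x, by simp, hxq⟩
    exact ⟨c, hc, a', ha', fun h => hq a' h q.start_mem_support, r,
      fun z hz hzY => hq z hzY (hrq hz)⟩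
  obtain ⟨c, hc, hcA⟩ := hreach p ha hp hxp
  obtain ⟨d, hd, hdB⟩ := hreach p.reverse hb (by simpa using hp) (by simpa using hxp)
  have hcd : c ≠ d := fun h => hY.notMem_reachG hcA (h ▸ hdB)
  refine ⟨c, d, ?_, hcA, hdB⟩
  simp only [Set.mem_insert_iff, Set.mem_singleton_iff] at hc hd
  rcases hc with rfl | rfl <;> rcases hd with rfl | rfl <;> simp_all [Sym2.eq_swap]

/-- Since `y` lies on the `B`-side of `Y`, an `A`–`B` walk meets `insert x Y` before it can use
the edge `xy`. -/
theorem IsSep.of_deleteEdges_insert (hxy : x ≠ y) (hY : IsSep (G.deleteEdges {s(x, y)}) A B Y)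
    (hy : y ∈ reachG (G.deleteEdges {s(x, y)}) B Y)
    (hZ : IsSep (G.deleteEdges {s(x, y)}) A (insert x Y) Z) : IsSep G A B Z := by
  intro a b ha hb p
  have hmeet : ∃ c ∈ insert y (insert x Y), c ∈ p.support := by
    rcases hY.exists_mem_support_or_mem_support ha hb p with ⟨s, hs, hsp⟩ | hxp
    · exact ⟨s, by simp [hs], hsp⟩
    · exact ⟨x, by simp, hxp⟩
  obtain ⟨c, hc, q, hqp, hqC⟩ := p.exists_deleteEdges_to_first_mem
    (C := insert y (insert x Y)) (by simp) (by simp) hxy hmeet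
  rcases hc with rfl | hc
  · have hyY := notMem_of_mem_reachG hy
    have hqY : ∀ z ∈ q.support, z ∉ Y := fun z hz hzY =>
      hyY (hqC z hz (by simp [hzY]) ▸ hzY)
    exact absurd hy <| hY.notMem_reachG ⟨a, ha, hqY a q.start_mem_support, q, hqY⟩
  · obtain ⟨s, hs, hsq⟩ := hZ ha hc q
    exact ⟨s, hs, hqp hsq⟩

namespace SimpleGraph

structure Linkage (G : SimpleGraph V) (A B : Set V) (ι : Type*) where
  src : ι → V
  dst : ι → V
  walk : ∀ i, G.Walk (src i) (dst i)
  src_mem : ∀ i, src i ∈ A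
  dst_mem : ∀ i, dst i ∈ B
  disjoint : Pairwise fun i j => (walk i).support.Disjoint (walk j).support

namespace Linkage

def reverse (L : Linkage G A B ι) : Linkage G B A ι where
  src := L.dst
  dst := L.src
  walk i := (L.walk i).reverse
  src_mem := L.dst_mem
  dst_mem := L.src_mem
  disjoint i j hij := by simpa using L.disjoint hij

def mapLe (h : G ≤ H) (L : Linkage G A B ι) : Linkage H A B ι where
  src := L.src
  dst := L.dst
  walk i := (L.walk i).mapLe h
  src_mem := L.src_mem
  dst_mem := L.dst_mem
  disjoint i j hij := by simpa [Walk.support_mapLe_eq_support] using L.disjoint hij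

theorem dst_injective (L : Linkage G A B ι) : Function.Injective L.dst := fun i j hij =>
  by_contra fun hne => L.disjoint hne (L.walk i).end_mem_support
    (by rw [hij]; exact (L.walk j).end_mem_support)

theorem exists_dst_eq [Finite V] [Finite ι] (L : Linkage G A B ι) (hB : B.ncard ≤ Nat.card ι)
    (hb : b ∈ B) : ∃ i, L.dst i = b := by
  have hrange : Set.range L.dst = B := Set.eq_of_subset_of_ncard_le
    (Set.range_subset_iff.2 L.dst_mem) (by rwa [Set.ncard_range_of_injective L.dst_injective])
  rw [← hrange] at hb
  exact hb

def IsTight (L : Linkage G A B ι) : Prop :=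
  ∀ i, (L.walk i).IsPath ∧ ∀ z ∈ (L.walk i).support, z ∈ B → z = L.dst i

theorem exists_isTight (L : Linkage G A B ι) : ∃ L' : Linkage G A B ι, L'.IsTight := by
  choose c hc q hq hqL hqC using fun i =>
    (L.walk i).exists_isPath_to_first_mem ⟨_, L.dst_mem i, (L.walk i).end_mem_support⟩
  exact ⟨⟨L.src, c, q, L.src_mem, hc, fun i j hij z hzi hzj =>
    L.disjoint hij (hqL i hzi) (hqL j hzj)⟩, fun i => ⟨hq i, hqC i⟩⟩

theorem nonempty_of_edgeSet_eq_empty [Finite V] {k : ℕ} (hE : G.edgeSet = ∅)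
    (hk : ∀ C, IsSep G A B C → k ≤ C.ncard) : Nonempty (Linkage G A B (Fin k)) := by
  have hsep : IsSep G A B (A ∩ B) := by
    rintro a b ha hb (_ | ⟨h, _⟩)
    · exact ⟨a, ⟨ha, hb⟩, Walk.start_mem_support _⟩
    · exact absurd (G.mem_edgeSet.2 h) (hE ▸ Set.notMem_empty _)
  have : Nonempty (Fin k ↪ ↥(A ∩ B)) := by
    have := Fintype.ofFinite V
    classical
    exact Function.Embedding.nonempty_of_card_le
      (by rw [Fintype.card_fin, ← Nat.card_eq_fintype_card, Nat.card_coe_set_eq]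
          exact hk _ hsep)
  obtain ⟨f⟩ := this
  exact ⟨⟨fun i => f i, fun i => f i, fun i => Walk.nil, fun i => (f i).2.1, fun i => (f i).2.2,
    fun i j hij => by simpa using fun h => hij (f.injective (Subtype.ext h)).symm⟩⟩

/-- Göring's gluing step: the `A`-side linkage ends in `insert x Y`, the `B`-side one in
`insert y Y`; they are joined at their common ends in `Y` and across the edge `xy`. -/
theorem nonempty_of_isTight_pair [Finite V] {k : ℕ} (hadj : G.Adj x y)
    (hY : IsSep (G.deleteEdges {s(x, y)}) A B Y) (hyY : y ∉ Y) (hYk : Y.ncard < k)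
    (LA : Linkage (G.deleteEdges {s(x, y)}) A (insert x Y) (Fin k))
    (LB : Linkage (G.deleteEdges {s(x, y)}) B (insert y Y) (Fin k))
    (hLA : LA.IsTight) (hLB : LB.IsTight) : Nonempty (Linkage G A B (Fin k)) := by
  classical
  have hle : G.deleteEdges {s(x, y)} ≤ G := deleteEdges_le _
  have hcard : (insert y Y).ncard ≤ Nat.card (Fin k) := by
    have := Set.ncard_insert_le y Y
    simp only [Nat.card_eq_fintype_card, Fintype.card_fin]
    omega
  have hmatch : ∀ i, ∃ j, ∃ w : G.Walk (LA.src i) (LB.src j),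
      (∀ z ∈ w.support, z ∈ (LA.walk i).support ∨ z ∈ (LB.walk j).support) ∧
      LA.dst i = if LB.dst j = y then x else LB.dst j := by
    intro i
    rcases LA.dst_mem i with hx | hdY
    · obtain ⟨j, hj⟩ := LB.exists_dst_eq hcard (Set.mem_insert y Y)
      refine ⟨j, ((LA.walk i).mapLe hle).append
        (Walk.cons (by rw [hx]; exact hadj) (((LB.walk j).reverse.mapLe hle).copy hj rfl)), ?_,
        by simp [hj, hx]⟩
      intro z hz
      simp only [Walk.mem_support_append_iff, Walk.support_mapLe_eq_support, Walk.support_cons,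
        Walk.support_copy, Walk.support_reverse, List.mem_cons, List.mem_reverse] at hz
      rcases hz with hz | rfl | hz
      · exact Or.inl hz
      · exact Or.inl (LA.walk i).end_mem_support
      · exact Or.inr hz
    · obtain ⟨j, hj⟩ := LB.exists_dst_eq hcard (Set.mem_insert_of_mem y hdY)
      refine ⟨j, ((LA.walk i).mapLe hle).append
        (((LB.walk j).reverse.mapLe hle).copy hj rfl), ?_, ?_⟩
      · intro z hz
        simpa [Walk.mem_support_append_iff, Walk.support_mapLe_eq_support] using hz
      · rw [hj, if_neg fun h : LA.dst i = y => hyY (h ▸ hdY)]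
  choose j w hw hj using hmatch
  have hdst : ∀ i i', LA.dst i = LB.dst (j i') → i = i' := by
    intro i i' h
    have hy' : LB.dst (j i') ≠ y := fun h' => by
      rcases LA.dst_mem i with h'' | h''
      · exact hadj.ne (h''.symm.trans (h.trans h'))
      · exact hyY (h' ▸ h ▸ h'')
    exact LA.dst_injective (by rw [hj i', if_neg hy', h])
  refine ⟨⟨LA.src, fun i => LB.src (j i), w, LA.src_mem, fun i => LB.src_mem _, ?_⟩⟩
  intro i i' hii' z hz hz'
  have hji : j i ≠ j i' := fun h => hii' (LA.dst_injective (by rw [hj i, hj i', h]))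
  have hcross : ∀ i i', z ∈ (LA.walk i).support → z ∈ (LB.walk (j i')).support → i = i' :=
    fun i i' hzA hzB => hdst i i' <| hY.eq_of_mem_support (Set.subset_insert _ _)
      (Set.subset_insert _ _) (LA.src_mem i) (LB.src_mem _) (hLA i).1 (hLB _).1 (hLA i).2
      (hLB _).2 hzA hzB
  rcases hw i z hz with hzi | hzi <;> rcases hw i' z hz' with hzi' | hzi'
  · exact LA.disjoint hii' hzi hzi'
  · exact hii' (hcross i i' hzi hzi')
  · exact hii' (hcross i' i hzi' hzi).symm
  · exact LB.disjoint hji hzi hzi'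

end Linkage

/-- Menger's theorem, by Göring's induction on the number of edges: if `G - xy` has a small
`A`–`B` separator `Y`, orient `xy` across `Y` and glue linkages of `G - xy` into `insert x Y` and
`insert y Y`. -/
theorem nonempty_linkage_of_forall_le_ncard [Finite V] {k : ℕ}
    (hk : ∀ C, IsSep G A B C → k ≤ C.ncard) : Nonempty (Linkage G A B (Fin k)) := by
  induction hn : G.edgeSet.ncard using Nat.strong_induction_on generalizing G A B with
  | _ n ih =>
  rcases G.edgeSet.eq_empty_or_nonempty with hE | ⟨e, he⟩
  · exact Linkage.nonempty_of_edgeSet_eq_empty hE hk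
  induction e using Sym2.ind with | _ x y => ?_
  have hlt : (G.deleteEdges {s(x, y)}).edgeSet.ncard < n := by
    rw [← hn, edgeSet_deleteEdges]
    exact Set.ncard_sdiff_singleton_lt_of_mem he
  by_cases hG' : ∀ C, IsSep (G.deleteEdges {s(x, y)}) A B C → k ≤ C.ncard
  · exact ⟨(ih _ hlt hG' rfl).some.mapLe (deleteEdges_le _)⟩
  push Not at hG'
  obtain ⟨Y, hY, hYk⟩ := hG'
  obtain ⟨x, y, hxy, hx, hy⟩ := hY.exists_reachG_of_deleteEdges (G.mem_edgeSet.1 he).ne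
    fun h => (hk Y h).not_gt hYk
  rw [← hxy] at hY hx hy he hlt
  have hadj : G.Adj x y := G.mem_edgeSet.1 he
  have hswap : G.deleteEdges {s(y, x)} = G.deleteEdges {s(x, y)} := by rw [Sym2.eq_swap]
  obtain ⟨LA⟩ := ih _ hlt (A := A) (B := insert x Y)
    (fun Z hZ => hk Z (hY.of_deleteEdges_insert hadj.ne hy hZ)) rfl
  obtain ⟨LB⟩ := ih _ hlt (A := B) (B := insert y Y)
    (fun Z hZ => hk Z (IsSep.symm <| (hswap ▸ hY.symm).of_deleteEdges_insert hadj.ne.symm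
      (hswap ▸ hx) (hswap ▸ hZ))) rfl
  obtain ⟨LA, hLA⟩ := LA.exists_isTight
  obtain ⟨LB, hLB⟩ := LB.exists_isTight
  exact Linkage.nonempty_of_isTight_pair hadj hY (notMem_of_mem_reachG hy) hYk LA LB hLA hLB

end SimpleGraph

theorem LinkedInto.exists_isTight [Finite V] (h : LinkedInto G S Y) :
    ∃ L : Linkage G Y S (Fin S.ncard), L.IsTight ∧ ∀ s ∈ S, ∃ i, L.dst i = s := by
  have hk : ∀ C, IsSep G S Y C → S.ncard ≤ C.ncard := fun C hC =>
    h ▸ Nat.sInf_le ⟨C, hC, rfl⟩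
  obtain ⟨L⟩ := nonempty_linkage_of_forall_le_ncard hk
  obtain ⟨L', hL'⟩ := L.reverse.exists_isTight
  exact ⟨L', hL', fun s hs => L'.exists_dst_eq (by simp) hs⟩

theorem IsSeparation.symm (h : IsSeparation G A S B) : IsSeparation G B S A where
  disjoint_AS := h.disjoint_SB.symm
  disjoint_AB := h.disjoint_AB.symm
  disjoint_SB := h.disjoint_AS.symm
  union_eq := by rw [← h.union_eq]; ac_rfl
  no_adj _ _ hb ha hadj := h.no_adj ha hb hadj.symm

theorem IsSeparation.notMem_right (h : IsSeparation G A S B) (hv : v ∈ A ∪ S) : v ∉ B :=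
  hv.elim (fun hA => Set.disjoint_left.1 h.disjoint_AB hA)
    fun hS => Set.disjoint_left.1 h.disjoint_SB hS

theorem IsSeparation.mem_of_walk (h : IsSeparation G A S B) (p : G.Walk u v) (hu : u ∈ A)
    (hp : ∀ z ∈ p.support, z ∉ S) : ∀ z ∈ p.support, z ∈ A := by
  induction p with
  | nil => simpa using hu
  | @cons u c v hadj p ih =>
    have hc : c ∈ A := by
      have hc : c ∈ A ∪ S ∪ B := h.union_eq ▸ Set.mem_univ c
      rcases hc with (hc | hc) | hc
      · exact hc
      · exact absurd hc (hp c (by simp))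
      · exact absurd hadj (h.no_adj hu hc)
    simp only [Walk.support_cons, List.mem_cons, forall_eq_or_imp] at hp ⊢
    exact ⟨hu, ih hc hp.2⟩

theorem IsSeparation.mem_of_isTight (h : IsSeparation G A S B) (hY : Y ⊆ B ∪ S)
    (L : Linkage G Y S ι) (hL : L.IsTight) (i : ι) :
    ∀ z ∈ (L.walk i).support, z = L.dst i ∨ z ∈ B := by
  classical
  intro z hz
  refine or_iff_not_imp_left.2 fun hzd => ?_
  have hpre : ∀ w ∈ ((L.walk i).takeUntil z hz).support, w ∉ S := fun w hw hwS =>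
    hzd ((hL i).1.eq_of_mem_takeUntil (hL i).2 hz hw hwS).2
  have hsrc : L.src i ∈ B :=
    (hY (L.src_mem i)).resolve_right (hpre _ (Walk.start_mem_support _))
  exact h.symm.mem_of_walk _ hsrc hpre z (Walk.end_mem_support _)

namespace SimpleGraph

theorem induce_singleton_connected (u : V) : (G.induce {u}).Connected :=
  ⟨Preconnected.of_subsingleton⟩

/-- Consecutive vertices of `X` along a walk are adjacent in the torso. -/
theorem Walk.connected_induce_torso (p : G.Walk u v) (hv : v ∈ X) :
    ((torsoGraph G X).induce {z | z ∈ p.support ∧ z ∈ X}).Connected := by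
  induction p with
  | @nil w =>
    have hset : {z | z ∈ (nil : G.Walk w w).support ∧ z ∈ X} = {w} := by
      ext z
      simp only [support_nil, List.mem_singleton, Set.mem_ofPred_eq, Set.mem_singleton_iff]
      exact ⟨fun h => h.1, fun h => ⟨h, h ▸ hv⟩⟩
    rw [hset]
    exact induce_singleton_connected w
  | @cons u c v hadj p ih =>
    by_cases hu : u ∈ X
    swap
    · have hset : {z | z ∈ (cons hadj p).support ∧ z ∈ X} = {z | z ∈ p.support ∧ z ∈ X} := by
        ext z
        simp only [support_cons, List.mem_cons, Set.mem_ofPred_eq]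
        exact ⟨fun ⟨h, hz⟩ => ⟨h.resolve_left fun h => hu (h ▸ hz), hz⟩, fun h => ⟨.inr h.1, h.2⟩⟩
      rw [hset]
      exact ih hv
    have hset : {z | z ∈ (cons hadj p).support ∧ z ∈ X} = {u} ∪ {z | z ∈ p.support ∧ z ∈ X} := by
      ext z
      simp only [support_cons, List.mem_cons, Set.mem_ofPred_eq, Set.mem_union,
        Set.mem_singleton_iff]
      constructor
      · rintro ⟨rfl | h, hz⟩
        exacts [.inl rfl, .inr ⟨h, hz⟩]
      · rintro (rfl | ⟨h, hz⟩)
        exacts [⟨.inl rfl, hu⟩, ⟨.inr h, hz⟩]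
    rw [hset]
    obtain ⟨z, hzX, q, -, hqp, hqX⟩ :=
      p.exists_isPath_to_first_mem (C := X) ⟨v, hv, p.end_mem_support⟩
    have hzp : z ∈ p.support := hqp q.end_mem_support
    by_cases huz : u = z
    · rw [Set.union_eq_right.2 (by simpa [huz] using ⟨hzp, hzX⟩)]
      exact ih hv
    refine connected_induce_union (induce_singleton_connected u).preconnected
      (ih hv).preconnected rfl ⟨hzp, hzX⟩ ⟨huz, hu, hzX, cons hadj q, ?_⟩
    simp only [support_cons, List.mem_cons, forall_eq_or_imp, true_or, true_and]
    exact fun w hw => .inr ((em (w ∈ X)).imp (hqX w hw) id)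

end SimpleGraph

theorem torsoGraph_adj_of_adj (h : G.Adj u v) (hu : u ∈ X) (hv : v ∈ X) :
    (torsoGraph G X).Adj u v :=
  ⟨h.ne, hu, hv, h.toWalk, by simp⟩

theorem IsTorsoTreeDecomp.connected_induce_nodes (htd : IsTorsoTreeDecomp G X T bag)
    (hKX : K ⊆ X) (hK : ((torsoGraph G X).induce K).Connected) :
    (T.induce {t | (K ∩ bag t).Nonempty}).Connected := by
  have hnodes : ∀ z (hz : z ∈ K) t t' (ht : z ∈ bag t) (ht' : z ∈ bag t'),
      (T.induce {t | (K ∩ bag t).Nonempty}).Reachable ⟨t, z, hz, ht⟩ ⟨t', z, hz, ht'⟩ :=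
    fun z hz t t' ht ht' => ((htd.conn z (hKX hz)).preconnected ⟨t, ht⟩ ⟨t', ht'⟩).map
      (T.induceHomOfLE fun s (hs : z ∈ bag s) => (⟨z, hz, hs⟩ : (K ∩ bag s).Nonempty)).toHom
  have hwalk : ∀ (a b : K), ((torsoGraph G X).induce K).Reachable a b →
      ∀ t t' (ht : ↑a ∈ bag t) (ht' : ↑b ∈ bag t'),
      (T.induce {t | (K ∩ bag t).Nonempty}).Reachable ⟨t, a, a.2, ht⟩ ⟨t', b, b.2, ht'⟩ := by
    rintro a b ⟨p⟩
    induction p with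
    | nil => exact hnodes _ (Subtype.prop _)
    | @cons a c b hadj p ih =>
      intro t t' ht ht'
      obtain ⟨s, has, hcs⟩ := htd.edge_bag hadj
      exact (hnodes a a.2 t s ht has).trans (ih s t' hcs ht')
  obtain ⟨z, hz⟩ := hK.nonempty
  obtain ⟨t, ht⟩ := htd.mem_bag z (hKX hz)
  rw [connected_iff_exists_forall_reachable]
  refine ⟨⟨t, z, hz, ht⟩, ?_⟩
  rintro ⟨t', z', hz', ht'⟩
  exact hwalk ⟨z, hz⟩ ⟨z', hz'⟩ (hK.preconnected _ _) t t' ht ht'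

theorem ncard_setOf_inter_nonempty_le {α β : Type*} [Finite β] {τ : α → Set β}
    (hτ : Pairwise fun a a' => Disjoint (τ a) (τ a')) (Z : Set β) :
    {a | (τ a ∩ Z).Nonempty}.ncard ≤ Z.ncard := by
  rcases isEmpty_or_nonempty β with hβ | hβ
  · simp [Set.eq_empty_of_isEmpty]
  refine Set.ncard_le_ncard_of_injOn (fun a => Classical.epsilon (· ∈ τ a ∩ Z))
    (fun a ha => (Classical.epsilon_spec ha).2) fun a ha a' ha' h => by_contra fun hne => ?_
  have h₁ := (Classical.epsilon_spec ha).1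
  have h₂ := (Classical.epsilon_spec ha').1
  simp only at h
  exact Set.disjoint_left.1 (hτ hne) h₁ (h ▸ h₂)

/-- Torso tree decompositions pull back along minor models of torsos; `τ a` is the branch set
of `a`. -/
theorem IsTorsoTreeDecomp.of_model {α : Type*} {H : SimpleGraph α}
    (htd : IsTorsoTreeDecomp G X T bag) (τ : α → Set V) (hτX : ∀ a, τ a ⊆ X)
    (hτconn : ∀ a, (τ a).Nonempty → ((torsoGraph G X).induce (τ a)).Connected)
    (hτadj : ∀ a b, (torsoGraph H {a | (τ a).Nonempty}).Adj a b →
      ∃ z ∈ τ a, ∃ z' ∈ τ b, (torsoGraph G X).Adj z z') :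
    IsTorsoTreeDecomp H {a | (τ a).Nonempty} T fun t => {a | (τ a ∩ bag t).Nonempty} where
  tree := htd.tree
  bag_subset _ _ ha := ha.mono Set.inter_subset_left
  mem_bag a := fun ⟨z, hz⟩ =>
    let ⟨t, ht⟩ := htd.mem_bag z (hτX a hz)
    ⟨t, z, hz, ht⟩
  edge_bag a b hab := by
    obtain ⟨z, hz, z', hz', hzz'⟩ := hτadj a b hab
    obtain ⟨t, ht, ht'⟩ := htd.edge_bag hzz'
    exact ⟨t, ⟨z, hz, ht⟩, ⟨z', hz', ht'⟩⟩
  conn a ha := htd.connected_induce_nodes (hτX a) (hτconn a ha)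

theorem exists_walk_of_restrictGraph {u v : ↥(A ∪ S)} (p : (restrictGraph G A S).Walk u v)
    (hp : ∀ a ∈ p.support, ∀ b ∈ p.support, ↑a ∈ S → ↑b ∈ S → a = b) :
    ∃ q : G.Walk u v, q.support = p.support.map Subtype.val := by
  induction p with
  | nil => exact ⟨Walk.nil, rfl⟩
  | @cons u c v hadj p ih =>
    obtain ⟨q, hq⟩ := ih fun a ha b hb => hp a (by simp [ha]) b (by simp [hb])
    have hG : G.Adj u c := by
      refine hadj.resolve_right fun hS => hS.1 ?_
      exact hp u (Walk.start_mem_support _) c (by simp) hS.2.1 hS.2.2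
    exact ⟨Walk.cons hG q, by simp [hq]⟩

namespace SimpleGraph.Linkage

/-- The branch set of `v` in the model of the torso of `restrictGraph G A S` inside
`torsoGraph G X`: the vertex `v` and the linkage path ending at `v`, cut down to `X`. -/
def branchSet (L : Linkage G Y S ι) (X : Set V) (v : V) : Set V :=
  {z | z ∈ X ∧ (z = v ∨ ∃ i, L.dst i = v ∧ z ∈ (L.walk i).support)}

variable (L : Linkage G Y S ι)

theorem branchSet_eq_of_dst_eq {i : ι} (hi : L.dst i = v) :
    L.branchSet X v = {z | z ∈ (L.walk i).support ∧ z ∈ X} := by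
  ext z
  simp only [branchSet, Set.mem_ofPred_eq]
  constructor
  · rintro ⟨hzX, rfl | ⟨j, hj, hz⟩⟩
    · exact ⟨hi ▸ (L.walk i).end_mem_support, hzX⟩
    · obtain rfl := L.dst_injective (hj.trans hi.symm)
      exact ⟨hz, hzX⟩
  · rintro ⟨hz, hzX⟩
    exact ⟨hzX, Or.inr ⟨i, hi, hz⟩⟩

theorem branchSet_subset_singleton (h : ∀ i, L.dst i ≠ v) : L.branchSet X v ⊆ {v} := by
  rintro z ⟨-, hz | ⟨i, hi, -⟩⟩
  exacts [hz, absurd hi (h i)]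

theorem mem_of_branchSet_nonempty (hne : (L.branchSet X v).Nonempty) (h : ∀ i, L.dst i ≠ v) :
    v ∈ X := by
  obtain ⟨z, hz⟩ := hne
  exact L.branchSet_subset_singleton h hz ▸ hz.1

theorem branchSet_nonempty (hsrc : ∀ i, L.src i ∈ X) (h : v ∈ X ∨ ∃ i, L.dst i = v) :
    (L.branchSet X v).Nonempty := by
  rcases h with hv | ⟨i, hi⟩
  · exact ⟨v, hv, Or.inl rfl⟩
  · exact ⟨L.src i, hsrc i, Or.inr ⟨i, hi, (L.walk i).start_mem_support⟩⟩

theorem connected_induce_branchSet (hsrc : ∀ i, L.src i ∈ X)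
    (hne : (L.branchSet X v).Nonempty) :
    ((torsoGraph G X).induce (L.branchSet X v)).Connected := by
  by_cases h : ∃ i, L.dst i = v
  · obtain ⟨i, hi⟩ := h
    have hrev : L.branchSet X v = {z | z ∈ (L.walk i).reverse.support ∧ z ∈ X} := by
      rw [L.branchSet_eq_of_dst_eq hi]
      simp only [Walk.support_reverse, List.mem_reverse]
    rw [hrev]
    exact (L.walk i).reverse.connected_induce_torso (hsrc i)
  · push Not at h
    rw [(Set.subset_singleton_iff_eq.1 (L.branchSet_subset_singleton h)).resolve_left
      hne.ne_empty]
    exact induce_singleton_connected v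

theorem disjoint_branchSet (hB : ∀ i, ∀ z ∈ (L.walk i).support, z = L.dst i ∨ z ∈ B)
    (hu : u ∉ B) (hv : v ∉ B) (huv : u ≠ v) :
    Disjoint (L.branchSet X u) (L.branchSet X v) := by
  rw [Set.disjoint_left]
  rintro z ⟨-, rfl | ⟨i, rfl, hzi⟩⟩ ⟨-, hzv | ⟨j, rfl, hzj⟩⟩
  · exact huv hzv
  · exact (hB j z hzj).elim huv hu
  · exact (hB i z hzi).elim (fun h => huv (hzv ▸ h).symm) (hzv ▸ hv)
  · exact L.disjoint (fun h : i = j => huv (by rw [h])) hzi hzj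

theorem exists_walk_to_branchSet (hsrc : ∀ i, L.src i ∈ X)
    (hne : (L.branchSet X v).Nonempty) :
    ∃ z ∈ L.branchSet X v, ∃ p : G.Walk z v, ∀ w ∈ p.support, w = z ∨ w ∉ X := by
  by_cases h : ∃ i, L.dst i = v
  · obtain ⟨i, rfl⟩ := h
    obtain ⟨z, hzX, q, -, hqp, hqX⟩ := (L.walk i).reverse.exists_isPath_to_first_mem (C := X)
      ⟨L.src i, hsrc i, Walk.end_mem_support _⟩
    refine ⟨z, ⟨hzX, Or.inr ⟨i, rfl, by simpa using hqp q.end_mem_support⟩⟩, q.reverse,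
      fun w hw => ?_⟩
    rw [Walk.support_reverse, List.mem_reverse] at hw
    exact (em (w ∈ X)).imp (hqX w hw) id
  · push Not at h
    exact ⟨v, ⟨L.mem_of_branchSet_nonempty hne h, Or.inl rfl⟩, Walk.nil, by simp⟩

/-- A torso edge of `restrictGraph G A S` with an endpoint `b ∉ S` comes from a walk of `G`
(a clique edge would need two vertices of `S`); it is extended back along the linkage path of
the other endpoint to its first vertex in `X`. -/
theorem exists_torsoGraph_adj_of_notMem (hsrc : ∀ i, L.src i ∈ X)
    (hdst : ∀ s ∈ S, ∃ i, L.dst i = s)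
    (hdisj : Pairwise fun a b : ↥(A ∪ S) => Disjoint (L.branchSet X a) (L.branchSet X b))
    {a b : ↥(A ∪ S)}
    (hab : (torsoGraph (restrictGraph G A S) {a | (L.branchSet X a).Nonempty}).Adj a b)
    (hbS : ↑b ∉ S) :
    ∃ z ∈ L.branchSet X a, ∃ z' ∈ L.branchSet X b, (torsoGraph G X).Adj z z' := by
  obtain ⟨hne, ha, hb, p, hp⟩ := hab
  have hpS : ∀ c ∈ p.support, ↑c ∈ S → c = a := fun c hc hcS =>
    (hp c hc).resolve_right fun h => h.elim (fun hcb => hbS (hcb ▸ hcS))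
      fun h => h (L.branchSet_nonempty hsrc (Or.inr (hdst c hcS)))
  obtain ⟨q, hq⟩ := exists_walk_of_restrictGraph p fun c hc c' hc' hcS hc'S =>
    (hpS c hc hcS).trans (hpS c' hc' hc'S).symm
  have hbX : ↑b ∈ X := L.mem_of_branchSet_nonempty hb fun i hi => hbS (hi ▸ L.dst_mem i)
  have hbb : ↑b ∈ L.branchSet X b := ⟨hbX, Or.inl rfl⟩
  obtain ⟨z, hz, r, hr⟩ := L.exists_walk_to_branchSet hsrc ha
  refine ⟨z, hz, b, hbb, fun hzb => Set.disjoint_left.1 (hdisj hne) hz (hzb ▸ hbb),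
    hz.1, hbX, r.append q, fun w hw => ?_⟩
  rcases (Walk.mem_support_append_iff r q).1 hw with hw | hw
  · exact (hr w hw).imp id Or.inr
  rw [hq, List.mem_map] at hw
  obtain ⟨c, hc, rfl⟩ := hw
  rcases hp c hc with rfl | rfl | hcX
  · exact (hr _ r.end_mem_support).imp id Or.inr
  · exact Or.inr (Or.inl rfl)
  · exact Or.inr (Or.inr fun h => hcX ⟨c, h, Or.inl rfl⟩)

theorem exists_torsoGraph_adj (hsrc : ∀ i, L.src i ∈ X) (hdst : ∀ s ∈ S, ∃ i, L.dst i = s)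
    (hdisj : Pairwise fun a b : ↥(A ∪ S) => Disjoint (L.branchSet X a) (L.branchSet X b))
    (hsrcAdj : Pairwise fun i j => G.Adj (L.src i) (L.src j)) {a b : ↥(A ∪ S)}
    (hab : (torsoGraph (restrictGraph G A S) {a | (L.branchSet X a).Nonempty}).Adj a b) :
    ∃ z ∈ L.branchSet X a, ∃ z' ∈ L.branchSet X b, (torsoGraph G X).Adj z z' := by
  by_cases hbS : ↑b ∈ S
  swap
  · exact L.exists_torsoGraph_adj_of_notMem hsrc hdst hdisj hab hbS
  by_cases haS : ↑a ∈ S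
  swap
  · obtain ⟨z, hz, z', hz', h⟩ :=
      L.exists_torsoGraph_adj_of_notMem hsrc hdst hdisj hab.symm haS
    exact ⟨z', hz', z, hz, h.symm⟩
  obtain ⟨i, hi⟩ := hdst a haS
  obtain ⟨j, hj⟩ := hdst b hbS
  have hij : i ≠ j := fun h => hab.1 (Subtype.ext (by rw [← hi, ← hj, h]))
  exact ⟨L.src i, ⟨hsrc i, Or.inr ⟨i, hi, Walk.start_mem_support _⟩⟩,
    L.src j, ⟨hsrc j, Or.inr ⟨j, hj, Walk.start_mem_support _⟩⟩,
    torsoGraph_adj_of_adj (hsrcAdj hij) (hsrc i) (hsrc j)⟩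

end SimpleGraph.Linkage

theorem IsYesInstance.restrict [Finite V] {Ws : Set (Set V)} {k : ℕ} {Wb : Set V}
    (hyes : IsYesInstance G Ws k) (hsep : IsSeparation G A S B) (hWb : Wb ∈ Ws)
    (hclique : G.IsClique Wb) (hlink : LinkedInto G S ((B ∪ S) ∩ Wb)) :
    IsYesInstance (restrictGraph G A S) (restrictSets Ws A S) k := by
  obtain ⟨κ, T, bag, X, htd, hcov, hwidth⟩ := hyes
  obtain ⟨L, hL, hdst⟩ := hlink.exists_isTight
  have hsrcWb : ∀ i, L.src i ∈ Wb := fun i => (L.src_mem i).2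
  have hsrc : ∀ i, L.src i ∈ X := fun i => hcov ⟨Wb, hWb, hsrcWb i⟩
  have hsrcAdj : Pairwise fun i j => G.Adj (L.src i) (L.src j) := fun i j hij =>
    hclique (hsrcWb i) (hsrcWb j) fun h => L.disjoint hij (L.walk i).start_mem_support
      (by rw [h]; exact (L.walk j).start_mem_support)
  have hdisj : Pairwise fun a b : ↥(A ∪ S) => Disjoint (L.branchSet X a) (L.branchSet X b) :=
    fun a b hab => L.disjoint_branchSet (hsep.mem_of_isTight Set.inter_subset_left L hL)
      (hsep.notMem_right a.2) (hsep.notMem_right b.2) (Subtype.coe_injective.ne hab)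
  refine ⟨κ, T, _, _, htd.of_model (H := restrictGraph G A S) (fun a => L.branchSet X a)
    (fun _ _ hz => hz.1) (fun _ => L.connected_induce_branchSet hsrc)
    (fun _ _ => L.exists_torsoGraph_adj hsrc hdst hdisj hsrcAdj), ?_,
    fun t => (ncard_setOf_inter_nonempty_le hdisj (bag t)).trans (hwidth t)⟩
  rintro v ⟨_, ⟨W, hW, rfl⟩, hv⟩
  refine L.branchSet_nonempty hsrc ?_
  rcases hW with ⟨hW, -⟩ | ⟨rfl, -⟩
  · exact Or.inl (hcov ⟨W, hW, hv⟩)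
  · exact Or.inr (hdst v hv)

end

/-- If `(A, S, B)` is a safe separation of the instance `I = (G, Ws, k)` and `I` is a
yes-instance, then both `I ◁ (A, S)` and `I ◁ (B, S)` are yes-instances. -/
theorem safe_separation_yes {V : Type} [Fintype V]
    (G : SimpleGraph V) (Ws : Set (Set V)) (k : ℕ)
    (hI : IsPSTWInstance G Ws k)
    (A S B : Set V) (hsafe : IsSafeSeparation G Ws A S B)
    (hyes : IsYesInstance G Ws k) :
    IsYesInstance (restrictGraph G A S) (restrictSets Ws A S) k ∧
    IsYesInstance (restrictGraph G B S) (restrictSets Ws B S) k := by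
  obtain ⟨hsep, -, -, Wa, hWa, Wb, hWb, hlinkA, hlinkB⟩ := hsafe
  exact ⟨hyes.restrict hsep hWb (hI.2.2.2 Wb hWb).1 hlinkB,
    hyes.restrict hsep.symm hWa (hI.2.2.2 Wa hWa).1 hlinkA⟩
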